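/- arXiv:2208.01926 — 3 statements merged into one kernel-verified Lean document; each statement's English description precedes it below -/
import Mathlib

section
/- Let Γ be a locally finite simple graph, F a field and λ ∈ F. Then the set S_{F,λ}(Γ) is finite if and only if the subspace of F^{V(Γ)} consisting of all finitely supported functions f with A_{Γ,F} f = λ·f is finite-dimensional over F. -/
/-!
A vertex `v` has a propagator iff every finitely supported eigenfunction `g` vanishes at `v`.
For the pairing `⟨f, g⟩ = ∑ f w * g w` of `V → F` with `V →₀ F` the operator `A - l` is
self-adjoint, so a propagator `f` gives `g v = ⟨(A - l) f, g⟩ = ⟨f, (A - l) g⟩ = 0`. Conversely,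
if evaluation at `v` kills the kernel of `A - l` on `V →₀ F`, it factors as `φ ∘ (A - l)` for a
linear functional `φ`, and `u ↦ φ (single u 1)` is a propagator. Hence `S_{F,l}` is the union of
the supports of the finitely supported eigenfunctions; this is finite exactly when their space is
finite-dimensional, since that space then embeds into `F^S`.
-/

open Function

/-- The adjacency operator of a locally finite simple graph over a field `F`:
`(adjOp G f) w = ∑_{u ∈ Γ(w)} f u`. -/
def adjOp {V F : Type*} (G : SimpleGraph V) [G.LocallyFinite] [Field F]
    (f : V → F) (w : V) : F :=
  ∑ u ∈ G.neighborFinset w, f u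

/-- An eigenfunction of the adjacency operator corresponding to `l`:
a nonzero `f` with `A f = l • f`. -/
def IsEigenfun {V F : Type*} (G : SimpleGraph V) [G.LocallyFinite] [Field F]
    (l : F) (f : V → F) : Prop :=
  f ≠ 0 ∧ ∀ w, adjOp G f w = l * f w

/-- An `(F, l)`-propagator of `G` with respect to the vertex `v`. -/
def IsPropagator {V F : Type*} [DecidableEq V] (G : SimpleGraph V) [G.LocallyFinite] [Field F]
    (l : F) (v : V) (f : V → F) : Prop :=
  ∀ w, adjOp G f w - l * f w = if w = v then 1 else 0

/-- The subspace of `F^{V(Γ)}` consisting of the finitely supported functions `f`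
with `A f = l • f`. -/
def finSuppEigSpace {V F : Type*} (G : SimpleGraph V) [G.LocallyFinite] [Field F]
    (l : F) : Submodule F (V → F) where
  carrier := {f | (support f).Finite ∧ ∀ w, adjOp G f w = l * f w}
  add_mem' := by
    rintro f g ⟨hf, hf'⟩ ⟨hg, hg'⟩
    refine ⟨(hf.union hg).subset (Function.support_add f g), fun w => ?_⟩
    have h1 := hf' w
    have h2 := hg' w
    simp only [adjOp, Pi.add_apply, Finset.sum_add_distrib] at *
    rw [h1, h2, mul_add]
  zero_mem' := by
    refine ⟨by simp, fun w => ?_⟩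
    simp [adjOp]
  smul_mem' := by
    rintro c f ⟨hf, hf'⟩
    refine ⟨hf.subset fun w hw => ?_, fun w => ?_⟩
    · simp only [Function.mem_support, Pi.smul_apply, smul_eq_mul] at hw ⊢
      intro h
      exact hw (by rw [h, mul_zero])
    have h1 := hf' w
    simp only [adjOp, Pi.smul_apply, smul_eq_mul, ← Finset.mul_sum] at *
    rw [h1]; ring

theorem LinearMap.exists_comp_eq_of_ker_le {K V₁ V₂ : Type*} [Field K] [AddCommGroup V₁]
    [Module K V₁] [AddCommGroup V₂] [Module K V₂] {f : V₁ →ₗ[K] V₂} {e : Module.Dual K V₁}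
    (h : LinearMap.ker f ≤ LinearMap.ker e) : ∃ φ : Module.Dual K V₂, φ ∘ₗ f = e := by
  have he : e ∈ LinearMap.range f.dualMap := by
    rw [LinearMap.range_dualMap_eq_dualAnnihilator_ker, Submodule.mem_dualAnnihilator]
    exact fun x hx => h hx
  obtain ⟨φ, rfl⟩ := he
  exact ⟨φ, rfl⟩

section SupportOfSubmodule

variable {ι K : Type*} [Field K]

theorem support_subset_biUnion_of_mem_span {s : Set (ι → K)} {g : ι → K}
    (hg : g ∈ Submodule.span K s) : support g ⊆ ⋃ x ∈ s, support x := by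
  induction hg using Submodule.span_induction with
  | mem x hx => exact Set.subset_biUnion_of_mem hx
  | zero => simp
  | add x y _ _ hx hy => exact (support_add x y).trans (Set.union_subset hx hy)
  | smul c x _ hx => exact (support_const_smul_subset c x).trans hx

theorem Submodule.finiteDimensional_iff_finite_setOf_exists_ne_zero {p : Submodule K (ι → K)}
    (hp : ∀ g ∈ p, (support g).Finite) :
    FiniteDimensional K p ↔ {i | ∃ g ∈ p, g i ≠ 0}.Finite := by
  constructor
  · intro hfd
    obtain ⟨s, hs, hspan⟩ := Submodule.fg_def.mp (Submodule.fg_iff_finiteDimensional p |>.mpr hfd)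
    refine (hs.biUnion fun x hx => hp x (hspan ▸ Submodule.subset_span hx)).subset ?_
    rintro i ⟨g, hg, hgi⟩
    exact support_subset_biUnion_of_mem_span (hspan ▸ hg) hgi
  · intro hS
    have := hS.fintype
    let restrict : p →ₗ[K] ({i | ∃ g ∈ p, g i ≠ 0} → K) :=
      LinearMap.pi fun i => LinearMap.proj (i : ι) ∘ₗ p.subtype
    refine FiniteDimensional.of_injective restrict fun g g' hgg' => Subtype.ext (funext fun i => ?_)
    by_contra hne
    have hi : i ∈ {i | ∃ g ∈ p, g i ≠ 0} := ⟨g - g', (g - g').2, sub_ne_zero.mpr hne⟩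
    exact hne (congrFun hgg' ⟨i, hi⟩)

end SupportOfSubmodule

section ShiftedAdjacency

variable {V F : Type*} [Field F] (G : SimpleGraph V) [G.LocallyFinite] (l : F)

def shiftedAdjOp : (V → F) →ₗ[F] (V → F) where
  toFun f w := adjOp G f w - l * f w
  map_add' f g := by
    funext w
    simp only [adjOp, Pi.add_apply, Finset.sum_add_distrib]
    ring
  map_smul' c f := by
    funext w
    simp only [adjOp, Pi.smul_apply, smul_eq_mul, RingHom.id_apply, ← Finset.mul_sum]
    ring

theorem shiftedAdjOp_apply (f : V → F) (w : V) :
    shiftedAdjOp G l f w = adjOp G f w - l * f w := rfl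

theorem mem_finSuppEigSpace_iff {g : V → F} :
    g ∈ finSuppEigSpace G l ↔ (support g).Finite ∧ shiftedAdjOp G l g = 0 := by
  simp only [funext_iff, shiftedAdjOp_apply, Pi.zero_apply, sub_eq_zero]
  rfl

noncomputable def shiftedAdjOpFinsupp : (V →₀ F) →ₗ[F] (V →₀ F) :=
  Finsupp.linearCombination F fun x =>
    ∑ u ∈ G.neighborFinset x, Finsupp.single u 1 - l • Finsupp.single x 1

theorem shiftedAdjOpFinsupp_single (x : V) :
    shiftedAdjOpFinsupp G l (Finsupp.single x 1) =
      ∑ u ∈ G.neighborFinset x, Finsupp.single u 1 - l • Finsupp.single x 1 := by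
  simp [shiftedAdjOpFinsupp]

theorem coe_shiftedAdjOpFinsupp (g : V →₀ F) :
    ⇑(shiftedAdjOpFinsupp G l g) = shiftedAdjOp G l g := by
  classical
  funext w
  suffices Finsupp.lapply w ∘ₗ shiftedAdjOpFinsupp G l =
      LinearMap.proj w ∘ₗ shiftedAdjOp G l ∘ₗ Finsupp.lcoeFun from LinearMap.congr_fun this g
  refine Finsupp.lhom_ext fun x c => ?_
  simp [shiftedAdjOpFinsupp, shiftedAdjOp_apply, adjOp, Finsupp.single_apply, G.adj_comm]
  split_ifs <;> ring

theorem linearCombination_shiftedAdjOp (f : V → F) (g : V →₀ F) :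
    Finsupp.linearCombination F (shiftedAdjOp G l f) g =
      Finsupp.linearCombination F f (shiftedAdjOpFinsupp G l g) := by
  suffices Finsupp.linearCombination F (shiftedAdjOp G l f) =
      Finsupp.linearCombination F f ∘ₗ shiftedAdjOpFinsupp G l from LinearMap.congr_fun this g
  refine Finsupp.lhom_ext fun x c => ?_
  simp [shiftedAdjOpFinsupp, shiftedAdjOp_apply, adjOp, Finsupp.linearCombination_single]

theorem coe_mem_finSuppEigSpace_iff (g : V →₀ F) :
    ⇑g ∈ finSuppEigSpace G l ↔ shiftedAdjOpFinsupp G l g = 0 := by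
  rw [mem_finSuppEigSpace_iff, ← coe_shiftedAdjOpFinsupp, Finsupp.coe_eq_zero]
  exact and_iff_right g.hasFiniteSupport

end ShiftedAdjacency

section Propagator

variable {V F : Type*} [DecidableEq V] [Field F] (G : SimpleGraph V) [G.LocallyFinite] (l : F)

theorem isPropagator_iff {v : V} {f : V → F} :
    IsPropagator G l v f ↔ shiftedAdjOp G l f = Pi.single v 1 := by
  simp only [IsPropagator, funext_iff, shiftedAdjOp_apply, Pi.single_apply]

theorem exists_isPropagator_iff (v : V) :
    (∃ f, IsPropagator G l v f) ↔ ∀ g ∈ finSuppEigSpace G l, g v = 0 := by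
  constructor
  · rintro ⟨f, hf⟩ g hg
    let g' := Finsupp.ofSupportFinite g ((mem_finSuppEigSpace_iff G l).1 hg).1
    have hg' : ⇑g' = g := Finsupp.ofSupportFinite_coe
    calc g v = Finsupp.linearCombination F (Pi.single v 1) g' := by
          simp [Finsupp.linearCombination_apply, Finsupp.sum, Pi.single_apply, hg']
      _ = Finsupp.linearCombination F f (shiftedAdjOpFinsupp G l g') := by
          rw [← (isPropagator_iff G l).1 hf, linearCombination_shiftedAdjOp]
      _ = 0 := by rw [(coe_mem_finSuppEigSpace_iff G l g').1 (hg' ▸ hg), map_zero]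
  · intro h
    obtain ⟨φ, hφ⟩ := LinearMap.exists_comp_eq_of_ker_le (f := shiftedAdjOpFinsupp G l)
      (e := Finsupp.lapply v) fun g hg => h g ((coe_mem_finSuppEigSpace_iff G l g).2 hg)
    refine ⟨fun u => φ (Finsupp.single u 1), fun w => ?_⟩
    have hw := LinearMap.congr_fun hφ (Finsupp.single w 1)
    rw [LinearMap.comp_apply, shiftedAdjOpFinsupp_single, map_sub, map_smul, map_sum] at hw
    simpa [Finsupp.single_apply, eq_comm, adjOp] using hw

end Propagator

theorem stmt4 {V F : Type*} [DecidableEq V] (G : SimpleGraph V) [G.LocallyFinite] [Field F]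
    (l : F) :
    {v : V | ¬ ∃ f : V → F, IsPropagator G l v f}.Finite ↔
      FiniteDimensional F (finSuppEigSpace G l) := by
  have hS : {v : V | ¬ ∃ f : V → F, IsPropagator G l v f} =
      {v | ∃ g ∈ finSuppEigSpace G l, g v ≠ 0} := by
    ext v
    simp only [Set.mem_ofPred_eq, exists_isPropagator_iff, not_forall, exists_prop]
  rw [hS, Submodule.finiteDimensional_iff_finite_setOf_exists_ne_zero fun g hg =>
    ((mem_finSuppEigSpace_iff G l).1 hg).1]
end

section
/- Let Γ be a locally finite simple graph, F a field, λ ∈ F and v a vertex of Γ. If Γ admits an (F,λ)-propagator with respect to v whose support is infinite, then A_{Γ,F} has an eigenfunction corresponding to λ with infinite support. If in addition no (F,λ)-propagator of Γ with respect to v has finite support, then such an eigenfunction can be chosen so that its (infinite) support contains v. -/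
open Function

/-!
Let `L` be `A - λ` acting on finitely supported functions `V →₀ F`. Since adjacency is symmetric,
every `f : V → F`, viewed as the functional `c ↦ ∑ c w * f w`, satisfies `⟨f, L c⟩ = ⟨(A - λ) f, c⟩`;
so eigenfunctions are the functionals vanishing on `range L`, and for a propagator `f` we get
`⟨f, L c⟩ = c v`.

If some propagator `g` has finite support, `f - g` is an eigenfunction with infinite support.
Otherwise `δ_v ∉ range L` (a preimage would be a finitely supported propagator), so some functional
vanishes on `range L` but not at `δ_v`: an eigenfunction `g` with `g v ≠ 0`. A finitely supported
eigenfunction `c` has `L c = 0`, hence `c v = ⟨f, L c⟩ = 0`; so the support of `g` is infinite.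
-/

section

variable {V F : Type*} {G : SimpleGraph V} [G.LocallyFinite] [Field F] {l : F}

lemma adjOp_add (f g : V → F) (w : V) : adjOp G (f + g) w = adjOp G f w + adjOp G g w :=
  Finset.sum_add_distrib

lemma adjOp_sub (f g : V → F) (w : V) : adjOp G (f - g) w = adjOp G f w - adjOp G g w :=
  Finset.sum_sub_distrib _ _

variable (G l) in
noncomputable def adjSubFinsupp : (V →₀ F) →ₗ[F] V →₀ F :=
  Finsupp.linearCombination F fun w =>
    (∑ u ∈ G.neighborFinset w, Finsupp.single u 1) - l • Finsupp.single w 1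

lemma adjSubFinsupp_apply (c : V →₀ F) (u : V) :
    adjSubFinsupp G l c u = adjOp G c u - l * c u := by
  classical
  induction c using Finsupp.induction_linear with
  | zero => simp [adjOp]
  | add c d hc hd =>
    simp only [map_add, Finsupp.coe_add, Pi.add_apply, hc, hd, adjOp_add]
    ring
  | single w a =>
    simp [adjSubFinsupp, adjOp, Finsupp.single_apply, SimpleGraph.adj_comm, eq_comm]
    split_ifs <;> ring

lemma linearCombination_comp_adjSubFinsupp (f : V → F) :
    (Finsupp.linearCombination F f).comp (adjSubFinsupp G l) =
      Finsupp.linearCombination F fun w => adjOp G f w - l * f w := by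
  ext w
  simp [adjSubFinsupp, adjOp]

variable [DecidableEq V] {v : V}

lemma IsPropagator.linearCombination_adjSubFinsupp {f : V → F} (hf : IsPropagator G l v f)
    (c : V →₀ F) : Finsupp.linearCombination F f (adjSubFinsupp G l c) = c v := by
  rw [← LinearMap.comp_apply, linearCombination_comp_adjSubFinsupp, funext hf]
  simp [Finsupp.linearCombination_apply]

lemma IsPropagator.eigen_apply_eq_zero_of_finite {f g : V → F} (hf : IsPropagator G l v f)
    (hg : ∀ w, adjOp G g w = l * g w) (hfin : (support g).Finite) : g v = 0 := by
  set c := Finsupp.ofSupportFinite g hfin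
  have hc : adjSubFinsupp G l c = 0 := by
    ext u
    simp [adjSubFinsupp_apply, c, Finsupp.ofSupportFinite_coe, hg]
  simpa [hc, c, Finsupp.ofSupportFinite_coe] using (hf.linearCombination_adjSubFinsupp c).symm

lemma isPropagator_of_adjSubFinsupp_eq_single {c : V →₀ F}
    (hc : adjSubFinsupp G l c = Finsupp.single v 1) : IsPropagator G l v c := by
  intro w
  simp [← adjSubFinsupp_apply, hc, Finsupp.single_apply, eq_comm]

lemma IsPropagator.adjOp_sub_eq {f g : V → F} (hf : IsPropagator G l v f)
    (hg : IsPropagator G l v g) (w : V) : adjOp G (f - g) w = l * (f - g) w := by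
  rw [adjOp_sub, Pi.sub_apply]
  linear_combination hf w - hg w

lemma exists_eigen_apply_ne_zero_of_not_exists_finite_propagator
    (h : ¬∃ f : V → F, IsPropagator G l v f ∧ (support f).Finite) :
    ∃ g : V → F, (∀ w, adjOp G g w = l * g w) ∧ g v ≠ 0 := by
  have hv : Finsupp.single v 1 ∉ LinearMap.range (adjSubFinsupp G l) := by
    rintro ⟨c, hc⟩
    exact h ⟨c, isPropagator_of_adjSubFinsupp_eq_single hc, c.hasFiniteSupport⟩
  obtain ⟨φ, hφv, hφ⟩ := Submodule.exists_dual_map_eq_bot_of_notMem hv inferInstance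
  set g : V → F := fun w => φ (Finsupp.single w 1)
  have hφg : φ = Finsupp.linearCombination F g := by
    ext w
    simp [g]
  refine ⟨g, fun w => ?_, hφv⟩
  have hres := congrArg (· (Finsupp.single w 1))
    (linearCombination_comp_adjSubFinsupp (G := G) (l := l) g)
  simp only [LinearMap.comp_apply, ← hφg, Finsupp.linearCombination_single, one_smul] at hres
  rw [← sub_eq_zero, ← hres]
  exact (Submodule.mem_bot F).mp (hφ ▸ Submodule.mem_map_of_mem (LinearMap.mem_range_self _ _))

end

theorem stmt6 {V F : Type*} [DecidableEq V] (G : SimpleGraph V) [G.LocallyFinite] [Field F]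
    (l : F) (v : V)
    (h : ∃ f : V → F, IsPropagator G l v f ∧ (support f).Infinite) :
    (∃ f : V → F, IsEigenfun G l f ∧ (support f).Infinite) ∧
      ((¬ ∃ f : V → F, IsPropagator G l v f ∧ (support f).Finite) →
        ∃ f : V → F, IsEigenfun G l f ∧ (support f).Infinite ∧ v ∈ support f) := by
  obtain ⟨f, hf, hf_inf⟩ := h
  by_cases hfin : ∃ g : V → F, IsPropagator G l v g ∧ (support g).Finite
  · obtain ⟨g, hg, hg_fin⟩ := hfin
    have hfg_inf : (support (f - g)).Infinite := by
      have hsupp : support f ⊆ support (f - g) ∪ support g := by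
        simpa using support_add (f - g) g
      exact (Set.infinite_union.mp (hf_inf.mono hsupp)).resolve_right hg_fin.not_infinite
    exact ⟨⟨f - g, ⟨support_nonempty_iff.mp hfg_inf.nonempty, hf.adjOp_sub_eq hg⟩, hfg_inf⟩,
      fun hno => absurd ⟨g, hg, hg_fin⟩ hno⟩
  · obtain ⟨g, hg, hgv⟩ := exists_eigen_apply_ne_zero_of_not_exists_finite_propagator hfin
    have hg_inf : (support g).Infinite := fun hg_fin =>
      hgv (hf.eigen_apply_eq_zero_of_finite hg hg_fin)
    have hg_eigen : IsEigenfun G l g := ⟨support_nonempty_iff.mp hg_inf.nonempty, hg⟩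
    exact ⟨⟨g, hg_eigen, hg_inf⟩, fun _ => ⟨g, hg_eigen, hg_inf, hgv⟩⟩
end

section
/- Let Δ be a finite connected simple graph with more than one vertex, let F be a field of characteristic 0, and let λ ∈ F be an element that is not an eigenvalue of the adjacency matrix of Δ over F, but such that some (F,λ)-propagator of Δ with respect to some vertex u takes the value 0 at some vertex u′. Then λ is algebraic over the prime subfield ℚ of F of degree strictly less than |V(Δ)| (i.e., λ is a root of a nonzero polynomial over ℚ of degree < |V(Δ)|). -/
/-!
Write `A` for the adjacency matrix and `n = |V|`. The propagator equation says
`(λ • 1 - A) *ᵥ (-f) = Pi.single u 1`; applying the adjugate gives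
`adj(λ • 1 - A) u' u = det(λ • 1 - A) * (-f u') = 0`. So `λ` is a root of the polynomial
`q = adj(X • 1 - A) u' u ∈ ℚ[X]`, whose degree is at most `n - 1` because it is a minor of
`X • 1 - A`. To see `q ≠ 0`, let `d = dist u' u` and multiply `adj(X • 1 - A) (X • 1 - A) = χ_A • 1`
by `∑_{k ≤ d} X^k A^(d-k)`: if `q = 0`, the `(u', u)` entry turns into an identity between a
polynomial of degree at most `n - 1` and `χ_A * (A^d) u' u`, which has degree `n` because
`(A^k) u' u` counts walks of length `k`, so it vanishes for `k < d` and not for `k = d`.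
-/

open Function

open Polynomial Matrix Finset

namespace Matrix

variable {n R : Type*} [Fintype n] [DecidableEq n] [CommRing R]

theorem natDegree_det_le_of_natDegree_le_row (M : Matrix n n R[X]) (e : n → ℕ)
    (h : ∀ i j, (M i j).natDegree ≤ e i) : M.det.natDegree ≤ ∑ i, e i := by
  rw [det_apply']
  refine natDegree_sum_le_of_forall_le _ _ fun σ _ => natDegree_mul_le.trans ?_
  rw [natDegree_intCast, zero_add]
  calc (∏ k, M (σ k) k).natDegree ≤ ∑ k, (M (σ k) k).natDegree := natDegree_prod_le _ _
    _ ≤ ∑ k, e (σ k) := sum_le_sum fun k _ => h _ _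
    _ = ∑ i, e i := Equiv.sum_comp σ e

theorem natDegree_adjugate_charmatrix_apply_le (A : Matrix n n R) (i j : n) :
    (adjugate (charmatrix A) i j).natDegree ≤ Fintype.card n - 1 := by
  rw [adjugate_apply]
  calc _ ≤ ∑ k, if k = j then 0 else 1 :=
        natDegree_det_le_of_natDegree_le_row _ _ fun k l => ?_
    _ = Fintype.card n - 1 := by simp [sum_ite, filter_ne', card_erase_of_mem]
  rw [updateRow_apply]
  split_ifs with hk
  · rcases eq_or_ne l i with rfl | hl
    · simp
    · simp [Pi.single_eq_of_ne hl]
  · exact (charmatrix_apply_natDegree_le k l).trans (by split_ifs <;> simp)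

theorem adjugate_charmatrix_apply_ne_zero (A : Matrix n n R) {i j : n} {d : ℕ}
    (hd : (A ^ d) i j ≠ 0) (hlt : ∀ k < d, (A ^ k) i j = 0) :
    adjugate (charmatrix A) i j ≠ 0 := by
  intro h0
  have : Nontrivial R := nontrivial_of_ne _ _ hd
  set B := adjugate (charmatrix A)
  set x := scalar n (X : R[X])
  set Y := (C : R →+* R[X]).mapMatrix A
  have hx : ∀ k, x ^ k = scalar n (X ^ k) := fun k => (map_pow _ _ _).symm
  have hY : ∀ k, Y ^ k = (C : R →+* R[X]).mapMatrix (A ^ k) := fun k => (map_pow _ _ _).symm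
  have key : B * (x ^ (d + 1) - Y ^ (d + 1)) =
      A.charpoly • ∑ k ∈ range (d + 1), x ^ k * Y ^ (d + 1 - 1 - k) := by
    have hB : B * (x - Y) = A.charpoly • (1 : Matrix n n R[X]) := adjugate_mul _
    rw [← (scalar_commute _ (fun _ => Commute.all _ _) Y).mul_geom_sum₂, ← mul_assoc, hB,
      smul_mul_assoc, one_mul]
  have hL : (B * (x ^ (d + 1) - Y ^ (d + 1))) i j = -∑ w, B i w * C ((A ^ (d + 1)) w j) := by
    rw [mul_sub, sub_apply, hx, scalar_apply, mul_diagonal, h0, zero_mul, zero_sub, hY]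
    rfl
  have hR : (∑ k ∈ range (d + 1), x ^ k * Y ^ (d + 1 - 1 - k)) i j = C ((A ^ d) i j) := by
    simp only [hx, hY, Nat.add_sub_cancel, sum_apply, scalar_apply, diagonal_mul,
      RingHom.mapMatrix_apply, map_apply]
    rw [sum_range_succ', sum_eq_zero fun k hk => ?_]
    · simp
    · rw [hlt _ (by simp at hk; omega), map_zero, mul_zero]
  have hentry := congrFun (congrFun key i) j
  rw [hL, smul_apply, hR, smul_eq_mul] at hentry
  have hcard : 0 < Fintype.card n := Fintype.card_pos_iff.mpr ⟨i⟩
  have hdeg : (A.charpoly * C ((A ^ d) i j)).natDegree = Fintype.card n := by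
    rw [natDegree_mul' (by simpa [A.charpoly_monic.leadingCoeff] using hd), natDegree_C,
      add_zero, charpoly_natDegree_eq_dim]
  have : Fintype.card n ≤ Fintype.card n - 1 :=
    calc Fintype.card n = (-∑ w, B i w * C ((A ^ (d + 1)) w j)).natDegree := by rw [hentry, hdeg]
      _ ≤ Fintype.card n - 1 := by
        rw [natDegree_neg]
        exact natDegree_sum_le_of_forall_le _ _ fun w _ =>
          (natDegree_mul_C_le _ _).trans (natDegree_adjugate_charmatrix_apply_le A i w)
  omega

theorem aeval_adjugate_charmatrix_apply {S : Type*} [CommRing S] [Algebra R S]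
    (A : Matrix n n R) (s : S) (i j : n) :
    aeval s (adjugate (charmatrix A) i j) = adjugate (scalar n s - A.map (algebraMap R S)) i j := by
  have hmap : (aeval s).mapMatrix (charmatrix A) = scalar n s - A.map (algebraMap R S) := by
    ext k l
    rcases eq_or_ne k l with rfl | hkl
    · simp [charmatrix_apply_eq]
    · simp [hkl]
  rw [← hmap, ← AlgHom.map_adjugate]
  rfl

theorem adjugate_apply_eq_zero_of_mulVec_eq_single {M : Matrix n n R} {f : n → R} {i j : n}
    (hf : M *ᵥ f = Pi.single j 1) (hfi : f i = 0) : adjugate M i j = 0 := by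
  have h := congrFun (congrArg (adjugate M *ᵥ ·) hf) i
  simp only [mulVec_mulVec, adjugate_mul, smul_mulVec, one_mulVec, mulVec_single_one] at h
  simpa [hfi] using h.symm

end Matrix

namespace SimpleGraph

variable {V : Type*} (G : SimpleGraph V) [DecidableRel G.Adj]

theorem map_adjMatrix {α β : Type*} [Zero α] [One α] [Zero β] [One β] (f : α → β)
    (h0 : f 0 = 0) (h1 : f 1 = 1) : (G.adjMatrix α).map f = G.adjMatrix β := by
  ext u v
  by_cases h : G.Adj u v <;> simp [h, h0, h1]

variable [Fintype V] [DecidableEq V]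

theorem adjMatrix_pow_apply_eq_zero_of_lt_dist {α : Type*} [Semiring α] {u v : V} {k : ℕ}
    (hk : k < G.dist u v) : (G.adjMatrix α ^ k) u v = 0 := by
  have : IsEmpty {p : G.Walk u v | p.length = k} :=
    ⟨fun ⟨p, hp⟩ => (G.dist_le p).not_gt (hp ▸ hk)⟩
  rw [adjMatrix_pow_apply_eq_card_walk, Fintype.card_eq_zero, Nat.cast_zero]

theorem adjMatrix_pow_dist_apply_ne_zero {α : Type*} [Semiring α] [CharZero α] {u v : V}
    (h : G.Reachable u v) : (G.adjMatrix α ^ G.dist u v) u v ≠ 0 := by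
  rw [adjMatrix_pow_apply_eq_card_walk, Nat.cast_ne_zero, ← Nat.pos_iff_ne_zero,
    Fintype.card_pos_iff]
  obtain ⟨p, hp⟩ := h.exists_walk_length_eq_dist
  exact ⟨⟨p, hp⟩⟩

end SimpleGraph

theorem IsPropagator.mulVec_eq_single {V F : Type*} [Fintype V] [DecidableEq V] [Field F]
    {G : SimpleGraph V} [DecidableRel G.Adj] {l : F} {v : V} {f : V → F}
    (hf : IsPropagator G l v f) : (scalar V l - G.adjMatrix F) *ᵥ -f = Pi.single v 1 := by
  ext w
  have := hf w
  simp only [adjOp, ← SimpleGraph.adjMatrix_mulVec_apply] at this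
  simp only [sub_mulVec, mulVec_neg, scalar_apply, Pi.sub_apply, Pi.neg_apply, mulVec_diagonal,
    Pi.single_apply, ← this]
  ring

theorem stmt15_general {V F : Type*} [Fintype V] [DecidableEq V] [Field F] [CharZero F]
    (D : SimpleGraph V) [DecidableRel D.Adj] (hconn : D.Connected)
    (l : F)
    (hprop : ∃ (u u' : V) (f : V → F), IsPropagator D l u f ∧ f u' = 0) :
    ∃ p : Polynomial ℚ, p ≠ 0 ∧ p.natDegree < Fintype.card V ∧ Polynomial.aeval l p = 0 := by
  obtain ⟨u, u', f, hf, hfu'⟩ := hprop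
  refine ⟨(D.adjMatrix ℚ).charmatrix.adjugate u' u, ?_, ?_, ?_⟩
  · exact adjugate_charmatrix_apply_ne_zero _
      (D.adjMatrix_pow_dist_apply_ne_zero (hconn u' u))
      fun k hk => D.adjMatrix_pow_apply_eq_zero_of_lt_dist hk
  · exact (natDegree_adjugate_charmatrix_apply_le _ u' u).trans_lt
      (Nat.sub_one_lt (Fintype.card_pos_iff.mpr ⟨u⟩).ne')
  · rw [aeval_adjugate_charmatrix_apply, D.map_adjMatrix _ (map_zero _) (map_one _)]
    exact adjugate_apply_eq_zero_of_mulVec_eq_single hf.mulVec_eq_single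
      (by rw [Pi.neg_apply, hfu', neg_zero])

theorem stmt15 {V F : Type*} [Fintype V] [DecidableEq V] [Field F] [CharZero F]
    (D : SimpleGraph V) [DecidableRel D.Adj] (hconn : D.Connected)
    (hcard : 1 < Fintype.card V) (l : F)
    (hnotev : ¬ ∃ f : V → F, f ≠ 0 ∧ Matrix.mulVec (D.adjMatrix F) f = l • f)
    (hprop : ∃ (u u' : V) (f : V → F), IsPropagator D l u f ∧ f u' = 0) :
    ∃ p : Polynomial ℚ, p ≠ 0 ∧ p.natDegree < Fintype.card V ∧ Polynomial.aeval l p = 0 :=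
  stmt15_general D hconn l hprop
end
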